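/- arXiv:1408.0489 — 2 statements merged into one kernel-verified Lean document; each statement's English description precedes it below -/
import Mathlib

section
/- Let η(0),...,η(ℓ-1) be i.i.d. Bernoulli(ρ) and set η^ℓ = (1/ℓ)∑ η(y), and g(η^ℓ) = (η^ℓ-ρ)² - (1/(ℓ-1))χ(η^ℓ) where χ(σ)=σ(1-σ). Then there exists a constant C (depending only on ρ) such that the variance of g(η^ℓ) under ν_ρ is at most C/ℓ². -/
open Finset

/-
Write `η^ℓ - ρ = S/ℓ`, where `S = ∑ y, (η(y) - ρ)` is the centred number of particles. Bounding the
variance by the second moment and using `(a - b)² ≤ 2a² + 2b²` together with `0 ≤ χ ≤ 1/4` gives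
`Var g(η^ℓ) ≤ 2 E[S⁴]/ℓ⁴ + 1/(8(ℓ-1)²)`. The fourth central moment of the binomial sum is
`E[S⁴] = ℓσ(1 - 3σ) + 3ℓ(ℓ-1)σ²` with `σ = ρ(1-ρ)`, computed by conditioning on the first site,
so `E[S⁴] = O(ℓ²)` and the variance is `O(ℓ⁻²)`.
-/

namespace BernoulliProduct

variable (ρ : ℝ) {n : ℕ}

def weight (η : Fin n → Bool) : ℝ := ∏ y, if η y then ρ else 1 - ρ

def expect (n : ℕ) (f : (Fin n → Bool) → ℝ) : ℝ := ∑ η, weight ρ η * f η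

def centeredSum (η : Fin n → Bool) : ℝ := ∑ y, ((if η y then 1 else 0) - ρ)

variable {ρ}

lemma weight_nonneg (h0 : 0 ≤ ρ) (h1 : ρ ≤ 1) (η : Fin n → Bool) : 0 ≤ weight ρ η :=
  prod_nonneg fun y _ => by split_ifs <;> linarith

lemma weight_cons (b : Bool) (η : Fin n → Bool) :
    weight ρ (Fin.cons b η : Fin (n + 1) → Bool) = (if b then ρ else 1 - ρ) * weight ρ η := by
  simp [weight, Fin.prod_univ_succ]

lemma centeredSum_cons (b : Bool) (η : Fin n → Bool) :
    centeredSum ρ (Fin.cons b η : Fin (n + 1) → Bool) =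
      centeredSum ρ η + ((if b then 1 else 0) - ρ) := by
  simp only [centeredSum, Fin.sum_univ_succ, Fin.cons_zero, Fin.cons_succ]
  ring

lemma expect_succ (f : (Fin (n + 1) → Bool) → ℝ) :
    expect ρ (n + 1) f = ρ * expect ρ n (fun η => f (Fin.cons true η))
      + (1 - ρ) * expect ρ n (fun η => f (Fin.cons false η)) := by
  rw [expect, ← (Fin.consEquiv fun _ => Bool).sum_comp, Fintype.sum_prod_type, Fintype.sum_bool]
  have hcons (b : Bool) (η : Fin n → Bool) : Fin.consEquiv (fun _ => Bool) (b, η) = Fin.cons b η :=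
    rfl
  simp only [hcons, weight_cons, expect, mul_sum]
  simp [mul_assoc]

lemma expect_const (n : ℕ) (c : ℝ) : expect ρ n (fun _ => c) = c := by
  induction n with
  | zero => simp [expect, weight]
  | succ n ih => rw [expect_succ, ih]; ring

lemma expect_add (f g : (Fin n → Bool) → ℝ) :
    expect ρ n (fun η => f η + g η) = expect ρ n f + expect ρ n g := by
  simp [expect, mul_add, sum_add_distrib]

lemma expect_const_mul (c : ℝ) (f : (Fin n → Bool) → ℝ) :
    expect ρ n (fun η => c * f η) = c * expect ρ n f := by
  simp [expect, mul_sum, mul_left_comm]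

lemma expect_mul_const (c : ℝ) (f : (Fin n → Bool) → ℝ) :
    expect ρ n (fun η => f η * c) = expect ρ n f * c := by
  simp [expect, sum_mul, mul_assoc]

lemma expect_sum {ι : Type*} (s : Finset ι) (f : ι → (Fin n → Bool) → ℝ) :
    expect ρ n (fun η => ∑ i ∈ s, f i η) = ∑ i ∈ s, expect ρ n (f i) := by
  simp only [expect, mul_sum]
  exact sum_comm

lemma expect_mono (h0 : 0 ≤ ρ) (h1 : ρ ≤ 1) {f g : (Fin n → Bool) → ℝ} (hfg : ∀ η, f η ≤ g η) :
    expect ρ n f ≤ expect ρ n g :=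
  sum_le_sum fun η _ => mul_le_mul_of_nonneg_left (hfg η) (weight_nonneg h0 h1 η)

lemma expect_add_pow (f : (Fin n → Bool) → ℝ) (c : ℝ) (k : ℕ) :
    expect ρ n (fun η => (f η + c) ^ k) =
      ∑ j ∈ range (k + 1), expect ρ n (fun η => f η ^ j) * c ^ (k - j) * k.choose j := by
  simp only [add_pow, expect_sum, mul_assoc, expect_mul_const]

lemma expect_centeredSum_pow_succ (k : ℕ) :
    expect ρ (n + 1) (fun η => centeredSum ρ η ^ k) =
      ρ * ∑ j ∈ range (k + 1),
          expect ρ n (fun η => centeredSum ρ η ^ j) * (1 - ρ) ^ (k - j) * k.choose j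
        + (1 - ρ) * ∑ j ∈ range (k + 1),
          expect ρ n (fun η => centeredSum ρ η ^ j) * (-ρ) ^ (k - j) * k.choose j := by
  simp only [expect_succ, centeredSum_cons, expect_add_pow, if_true, Bool.false_eq_true, if_false,
    sub_eq_add_neg, zero_add]

lemma expect_centeredSum : expect ρ n (fun η => centeredSum ρ η) = 0 := by
  induction n with
  | zero => simp [centeredSum, expect_const]
  | succ n ih =>
    simp only [expect_succ, centeredSum_cons, expect_add, ih, expect_const, if_true,
      Bool.false_eq_true, if_false]
    ring

lemma expect_centeredSum_sq :
    expect ρ n (fun η => centeredSum ρ η ^ 2) = n * (ρ * (1 - ρ)) := by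
  induction n with
  | zero => simp [centeredSum, expect_const]
  | succ n ih =>
    rw [expect_centeredSum_pow_succ]
    simp only [sum_range_succ, sum_range_zero, pow_zero, pow_one, ih, expect_centeredSum,
      expect_const]
    norm_num [Nat.choose]
    ring

lemma expect_centeredSum_pow_three :
    expect ρ n (fun η => centeredSum ρ η ^ 3) = n * (ρ * (1 - ρ) * (1 - 2 * ρ)) := by
  induction n with
  | zero => simp [centeredSum, expect_const]
  | succ n ih =>
    rw [expect_centeredSum_pow_succ]
    simp only [sum_range_succ, sum_range_zero, pow_zero, pow_one, ih, expect_centeredSum,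
      expect_centeredSum_sq, expect_const]
    norm_num [Nat.choose]
    ring

lemma expect_centeredSum_pow_four :
    expect ρ n (fun η => centeredSum ρ η ^ 4) =
      n * (ρ * (1 - ρ)) * (1 - 3 * (ρ * (1 - ρ))) + 3 * n * (n - 1) * (ρ * (1 - ρ)) ^ 2 := by
  induction n with
  | zero => simp [centeredSum, expect_const]
  | succ n ih =>
    rw [expect_centeredSum_pow_succ]
    simp only [sum_range_succ, sum_range_zero, pow_zero, pow_one, ih, expect_centeredSum,
      expect_centeredSum_sq, expect_centeredSum_pow_three, expect_const]
    norm_num [Nat.choose]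
    ring

lemma expect_centeredSum_pow_four_le (h0 : 0 ≤ ρ) (h1 : ρ ≤ 1) :
    expect ρ n (fun η => centeredSum ρ η ^ 4) ≤ n ^ 2 / 2 := by
  set σ := ρ * (1 - ρ)
  have hσ0 : 0 ≤ σ := mul_nonneg h0 (by linarith)
  have hσ1 : σ ≤ 1 / 4 := by nlinarith [sq_nonneg (ρ - 1 / 2)]
  have hn0 : (0 : ℝ) ≤ n := n.cast_nonneg
  have hn : (n : ℝ) ≤ n ^ 2 := by
    rcases n.eq_zero_or_pos with rfl | hn
    · simp
    · nlinarith [(Nat.one_le_cast (α := ℝ)).mpr hn]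
  have hsingle : n * σ * (1 - 3 * σ) ≤ n ^ 2 / 4 := by
    nlinarith [mul_le_mul_of_nonneg_left hσ1 hn0, mul_nonneg hn0 (mul_nonneg hσ0 hσ0)]
  have hpair : 3 * n * (n - 1) * σ ^ 2 ≤ 3 * n ^ 2 / 16 := by
    have hσsq : σ ^ 2 ≤ 1 / 16 := by nlinarith
    nlinarith [mul_le_mul_of_nonneg_left hσsq (sq_nonneg (n : ℝ)), mul_nonneg hn0 (sq_nonneg σ)]
  rw [expect_centeredSum_pow_four]
  nlinarith

noncomputable def empiricalDensity (η : Fin n → Bool) : ℝ := (∑ y, if η y then 1 else 0) / n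

lemma empiricalDensity_mem_Icc (η : Fin n → Bool) : empiricalDensity η ∈ Set.Icc 0 1 := by
  have hsum : ∑ y, (if η y then (1 : ℝ) else 0) ≤ n := by
    calc ∑ y, (if η y then (1 : ℝ) else 0) ≤ ∑ _y : Fin n, (1 : ℝ) :=
          sum_le_sum fun y _ => ite_le_one le_rfl zero_le_one
      _ = n := by simp
  exact ⟨div_nonneg (sum_nonneg fun y _ => by split_ifs <;> norm_num) n.cast_nonneg,
    div_le_one_of_le₀ hsum n.cast_nonneg⟩

lemma empiricalDensity_sub (hn : n ≠ 0) (η : Fin n → Bool) :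
    empiricalDensity η - ρ = centeredSum ρ η / n := by
  simp only [empiricalDensity, centeredSum, sum_sub_distrib, sum_const, card_univ, Fintype.card_fin,
    nsmul_eq_mul]
  field_simp

end BernoulliProduct

lemma sq_sub_mul_quadratic_le {m ρ c : ℝ} (hm : m ∈ Set.Icc 0 1) :
    ((m - ρ) ^ 2 - c * (m * (1 - m))) ^ 2 ≤ 2 * (m - ρ) ^ 4 + c ^ 2 / 8 := by
  obtain ⟨hm0, hm1⟩ := hm
  have hχ0 : 0 ≤ m * (1 - m) := mul_nonneg hm0 (by linarith)
  have hχ1 : m * (1 - m) ≤ 1 / 4 := by nlinarith [sq_nonneg (m - 1 / 2)]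
  have hχsq : (m * (1 - m)) ^ 2 ≤ 1 / 16 := by nlinarith
  have hcχ : (c * (m * (1 - m))) ^ 2 ≤ c ^ 2 / 16 := by
    rw [mul_pow]; nlinarith [mul_le_mul_of_nonneg_left hχsq (sq_nonneg c)]
  nlinarith [add_sq_le (a := (m - ρ) ^ 2) (b := -(c * (m * (1 - m))))]

open BernoulliProduct in
/-- Variance bound: for i.i.d. Bernoulli(ρ) variables, with
`g(m) = (m-ρ)² - χ(m)/(ℓ-1)` evaluated at the empirical density `η^ℓ`,
there is a constant `C = C(ρ)` such that `Var_ρ[g(η^ℓ)] ≤ C/ℓ²` for every `ℓ ≥ 2`. -/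
theorem stmt2 (ρ : ℝ) (h0 : 0 < ρ) (h1 : ρ < 1) :
    ∃ C : ℝ, 0 < C ∧ ∀ ℓ : ℕ, 2 ≤ ℓ →
      let ind : Bool → ℝ := fun b => if b then 1 else 0
      let w : (Fin ℓ → Bool) → ℝ := fun η => ∏ y, (if η y then ρ else 1 - ρ)
      let avg : (Fin ℓ → Bool) → ℝ := fun η => (∑ y, ind (η y)) / ℓ
      let g : ℝ → ℝ := fun m => (m - ρ) ^ 2 - (1 / ((ℓ : ℝ) - 1)) * (m * (1 - m))
      let E : ((Fin ℓ → Bool) → ℝ) → ℝ := fun f => ∑ η, w η * f η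
      E (fun η => (g (avg η)) ^ 2) - (E (fun η => g (avg η))) ^ 2 ≤ C / (ℓ : ℝ) ^ 2 := by
  refine ⟨2, two_pos, fun ℓ hℓ => ?_⟩
  intro ind w avg g E
  have hℓ2 : (2 : ℝ) ≤ ℓ := by exact_mod_cast hℓ
  set c : ℝ := 1 / ((ℓ : ℝ) - 1)
  have hpt (η : Fin ℓ → Bool) : g (avg η) ^ 2 ≤ 2 / ℓ ^ 4 * centeredSum ρ η ^ 4 + c ^ 2 / 8 :=
    calc g (avg η) ^ 2 ≤ 2 * (avg η - ρ) ^ 4 + c ^ 2 / 8 :=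
          sq_sub_mul_quadratic_le (empiricalDensity_mem_Icc η)
      _ = 2 / ℓ ^ 4 * centeredSum ρ η ^ 4 + c ^ 2 / 8 := by
          rw [show avg η = empiricalDensity η from rfl, empiricalDensity_sub (by omega)]
          ring
  have hc : c ^ 2 / 8 ≤ 1 / (2 * ℓ ^ 2) := by
    rw [div_pow, one_pow, div_div, one_div_le_one_div (by nlinarith) (by positivity)]
    nlinarith
  calc E (fun η => g (avg η) ^ 2) - E (fun η => g (avg η)) ^ 2
      ≤ expect ρ ℓ (fun η => g (avg η) ^ 2) := sub_le_self _ (sq_nonneg _)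
    _ ≤ expect ρ ℓ (fun η => 2 / ℓ ^ 4 * centeredSum ρ η ^ 4 + c ^ 2 / 8) :=
        expect_mono h0.le h1.le hpt
    _ = 2 / ℓ ^ 4 * expect ρ ℓ (fun η => centeredSum ρ η ^ 4) + c ^ 2 / 8 := by
        rw [expect_add, expect_const_mul, expect_const]
    _ ≤ 2 / ℓ ^ 4 * (ℓ ^ 2 / 2) + 1 / (2 * ℓ ^ 2) := by
        gcongr
        exact expect_centeredSum_pow_four_le h0.le h1.le
    _ ≤ 2 / ℓ ^ 2 := by
        field_simp
        nlinarith
end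

section
/- Let η^ℓ = (1/ℓ)∑_{y=0}^{ℓ-1}η(y) and η^{2ℓ} = (1/(2ℓ))∑_{y=0}^{2ℓ-1}η(y) for i.i.d. Bernoulli(ρ) variables η(0),...,η(2ℓ-1). Define Ṽ = (η^ℓ-ρ)² - χ(η^ℓ)/(ℓ-1) - (η^{2ℓ}-ρ)² + χ(η^{2ℓ})/(2ℓ-1) with χ(σ)=σ(1-σ). Then there is a constant C = C(ρ) with Var_ρ[Ṽ] ≤ C/ℓ². -/
/-!
Each χ-correction `σ(1-σ)/(ℓ-1)`, `σ(1-σ)/(2ℓ-1)` lies in `[0, 1/(2ℓ)]`, so pointwise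
`Ṽ² ≤ 2(η^ℓ-ρ)⁴ + 2(η^{2ℓ}-ρ)⁴ + 1/(2ℓ²)`. The fourth moment of a sum of `m` independent
centred Bernoulli variables is at most `m²` (peel off one coordinate: the odd cross terms vanish),
so `E(η^ℓ-ρ)⁴ ≤ 1/ℓ²` and `E(η^{2ℓ}-ρ)⁴ ≤ 1/(4ℓ²)`. Hence `Var Ṽ ≤ E Ṽ² ≤ 3/ℓ²`.
-/

open Finset

noncomputable section

section

variable {ι : Type*} {ρ : ℝ}

def centeredSum (ρ : ℝ) (A : Finset ι) (η : ι → Bool) : ℝ :=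
  ∑ i ∈ A, ((if η i then 1 else 0) - ρ)

def empiricalDensity (A : Finset ι) (η : ι → Bool) : ℝ :=
  (∑ i ∈ A, if η i then 1 else 0) / #A

lemma centeredSum_of_isEmpty [IsEmpty ι] (A : Finset ι) (η : ι → Bool) :
    centeredSum ρ A η = 0 := by
  simp [centeredSum, Finset.eq_empty_of_isEmpty A]

lemma empiricalDensity_mem_Icc (A : Finset ι) (η : ι → Bool) :
    empiricalDensity A η ∈ Set.Icc 0 1 := by
  have h0 : ∀ i ∈ A, (0 : ℝ) ≤ if η i then 1 else 0 := fun i _ => by split_ifs <;> norm_num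
  have h1 : ∀ i ∈ A, (if η i then 1 else 0 : ℝ) ≤ 1 := fun i _ => by split_ifs <;> norm_num
  refine ⟨div_nonneg (Finset.sum_nonneg h0) (Nat.cast_nonneg _),
    div_le_one_of_le₀ ?_ (Nat.cast_nonneg _)⟩
  simpa using Finset.sum_le_sum h1

lemma empiricalDensity_sub {A : Finset ι} (hA : A.Nonempty) (η : ι → Bool) :
    empiricalDensity A η - ρ = centeredSum ρ A η / #A := by
  have : (#A : ℝ) ≠ 0 := by exact_mod_cast hA.card_pos.ne'
  rw [empiricalDensity, centeredSum, Finset.sum_sub_distrib, Finset.sum_const, nsmul_eq_mul]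
  field_simp

end

section

variable {ι : Type*} [Fintype ι] [DecidableEq ι] {ρ : ℝ}

def bernoulliWeight (ρ : ℝ) (b : Bool) : ℝ := if b then ρ else 1 - ρ

def bernoulliExpect (ρ : ℝ) (f : (ι → Bool) → ℝ) : ℝ :=
  ∑ η, (∏ i, bernoulliWeight ρ (η i)) * f η

lemma sum_bernoulliWeight (ρ : ℝ) : ∑ b, bernoulliWeight ρ b = 1 := by
  simp [bernoulliWeight]

lemma bernoulliWeight_nonneg (h0 : 0 ≤ ρ) (h1 : ρ ≤ 1) (b : Bool) : 0 ≤ bernoulliWeight ρ b := by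
  cases b <;> simp [bernoulliWeight] <;> linarith

lemma bernoulliExpect_const (c : ℝ) : bernoulliExpect ρ (fun _ : ι → Bool => c) = c := by
  rw [bernoulliExpect, ← Finset.sum_mul, ← Fintype.prod_sum]
  simp only [sum_bernoulliWeight, Finset.prod_const_one, one_mul]

lemma bernoulliExpect_add (f g : (ι → Bool) → ℝ) :
    bernoulliExpect ρ (fun η => f η + g η) = bernoulliExpect ρ f + bernoulliExpect ρ g := by
  simp only [bernoulliExpect, mul_add, Finset.sum_add_distrib]

lemma bernoulliExpect_const_mul (c : ℝ) (f : (ι → Bool) → ℝ) :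
    bernoulliExpect ρ (fun η => c * f η) = c * bernoulliExpect ρ f := by
  simp only [bernoulliExpect, Finset.mul_sum]
  exact Finset.sum_congr rfl fun η _ => by ring

lemma bernoulliExpect_mono (h0 : 0 ≤ ρ) (h1 : ρ ≤ 1) {f g : (ι → Bool) → ℝ}
    (h : ∀ η, f η ≤ g η) : bernoulliExpect ρ f ≤ bernoulliExpect ρ g :=
  Finset.sum_le_sum fun η _ => mul_le_mul_of_nonneg_left (h η)
    (Finset.prod_nonneg fun _ _ => bernoulliWeight_nonneg h0 h1 _)

lemma bernoulliExpect_const_add_sq (x : ℝ) (T : (ι → Bool) → ℝ) :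
    bernoulliExpect ρ (fun η => (x + T η) ^ 2)
      = x ^ 2 + 2 * x * bernoulliExpect ρ T + bernoulliExpect ρ (fun η => T η ^ 2) := by
  simp only [add_sq, bernoulliExpect_add, mul_assoc, bernoulliExpect_const_mul,
    bernoulliExpect_const]

lemma bernoulliExpect_const_add_pow_four (x : ℝ) (T : (ι → Bool) → ℝ) :
    bernoulliExpect ρ (fun η => (x + T η) ^ 4)
      = x ^ 4 + 4 * x ^ 3 * bernoulliExpect ρ T + 6 * x ^ 2 * bernoulliExpect ρ (fun η => T η ^ 2)
        + 4 * x * bernoulliExpect ρ (fun η => T η ^ 3) + bernoulliExpect ρ (fun η => T η ^ 4) := by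
  have h : ∀ η, (x + T η) ^ 4
      = x ^ 4 + (4 * x ^ 3) * T η + (6 * x ^ 2) * T η ^ 2 + (4 * x) * T η ^ 3 + T η ^ 4 :=
    fun η => by ring
  simp only [h, bernoulliExpect_add, bernoulliExpect_const_mul, bernoulliExpect_const]

end

section

variable {ρ : ℝ} {n : ℕ}

lemma bernoulliExpect_succ (f : (Fin (n + 1) → Bool) → ℝ) :
    bernoulliExpect ρ f
      = ∑ b, bernoulliWeight ρ b * bernoulliExpect ρ (fun σ => f (Fin.cons b σ)) := by
  rw [bernoulliExpect, ← (Fin.consEquiv fun _ => Bool).sum_comp, Fintype.sum_prod_type]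
  refine Finset.sum_congr rfl fun b _ => ?_
  rw [bernoulliExpect, Finset.mul_sum]
  refine Finset.sum_congr rfl fun σ _ => ?_
  rw [Fin.prod_univ_succ, mul_assoc]
  rfl

lemma centeredSum_cons (A : Finset (Fin (n + 1))) (b : Bool) (σ : Fin n → Bool) :
    centeredSum ρ A (Fin.cons b σ)
      = (if 0 ∈ A then (if b then 1 else 0) - ρ else 0)
        + centeredSum ρ {i : Fin n | i.succ ∈ A} σ := by
  rw [centeredSum, centeredSum, ← Finset.filter_univ_mem A, Finset.sum_filter, Fin.sum_univ_succ,
    Finset.sum_filter]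
  simp only [Finset.filter_univ_mem, Fin.cons_zero, Fin.cons_succ]

lemma card_eq_card_succ_add_one {A : Finset (Fin (n + 1))} (h : 0 ∈ A) :
    #A = #({i : Fin n | i.succ ∈ A} : Finset (Fin n)) + 1 := by
  conv_lhs => rw [← Finset.filter_univ_mem A]
  rw [Fin.card_filter_univ_succ, if_pos h]

lemma card_eq_card_succ {A : Finset (Fin (n + 1))} (h : 0 ∉ A) :
    #A = #({i : Fin n | i.succ ∈ A} : Finset (Fin n)) := by
  conv_lhs => rw [← Finset.filter_univ_mem A]
  rw [Fin.card_filter_univ_succ, if_neg h]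

lemma bernoulliExpect_comp_centeredSum_of_zero_mem (g : ℝ → ℝ) {A : Finset (Fin (n + 1))}
    (h : 0 ∈ A) :
    bernoulliExpect ρ (fun η => g (centeredSum ρ A η))
      = ∑ b, bernoulliWeight ρ b * bernoulliExpect ρ
          (fun σ => g ((if b then 1 else 0) - ρ + centeredSum ρ {i : Fin n | i.succ ∈ A} σ)) := by
  simp only [bernoulliExpect_succ (fun η => g (centeredSum ρ A η)), centeredSum_cons, if_pos h]

lemma bernoulliExpect_comp_centeredSum_of_zero_notMem (g : ℝ → ℝ) {A : Finset (Fin (n + 1))}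
    (h : 0 ∉ A) :
    bernoulliExpect ρ (fun η => g (centeredSum ρ A η))
      = bernoulliExpect ρ (fun σ => g (centeredSum ρ {i : Fin n | i.succ ∈ A} σ)) := by
  simp only [bernoulliExpect_succ (fun η => g (centeredSum ρ A η)), centeredSum_cons, if_neg h,
    zero_add, ← Finset.sum_mul, sum_bernoulliWeight, one_mul]

lemma bernoulliExpect_centeredSum (A : Finset (Fin n)) :
    bernoulliExpect ρ (centeredSum ρ A) = 0 := by
  induction n with
  | zero => exact (congrArg _ (funext (centeredSum_of_isEmpty A))).trans (bernoulliExpect_const 0)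
  | succ n ih =>
    by_cases h : 0 ∈ A
    · refine (bernoulliExpect_comp_centeredSum_of_zero_mem id h).trans ?_
      simp only [id, bernoulliExpect_add, bernoulliExpect_const, ih, Fintype.sum_bool,
        bernoulliWeight, ↓reduceIte, Bool.false_eq_true]
      ring
    · exact (bernoulliExpect_comp_centeredSum_of_zero_notMem id h).trans (ih _)

lemma bernoulliExpect_centeredSum_sq (A : Finset (Fin n)) :
    bernoulliExpect ρ (fun η => centeredSum ρ A η ^ 2) = #A * (ρ * (1 - ρ)) := by
  induction n with
  | zero => simp [centeredSum_of_isEmpty, bernoulliExpect_const, Finset.eq_empty_of_isEmpty A]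
  | succ n ih =>
    by_cases h : 0 ∈ A
    · rw [bernoulliExpect_comp_centeredSum_of_zero_mem (· ^ 2) h, card_eq_card_succ_add_one h]
      simp only [bernoulliExpect_const_add_sq, bernoulliExpect_centeredSum, ih, Fintype.sum_bool,
        bernoulliWeight, ↓reduceIte, Bool.false_eq_true]
      push_cast
      ring
    · rw [bernoulliExpect_comp_centeredSum_of_zero_notMem (· ^ 2) h, card_eq_card_succ h, ih]

lemma bernoulliExpect_centeredSum_pow_four_le (h0 : 0 ≤ ρ) (h1 : ρ ≤ 1) (A : Finset (Fin n)) :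
    bernoulliExpect ρ (fun η => centeredSum ρ A η ^ 4) ≤ (#A : ℝ) ^ 2 := by
  induction n with
  | zero => simp [centeredSum_of_isEmpty, bernoulliExpect_const, Finset.eq_empty_of_isEmpty A]
  | succ n ih =>
    by_cases h : 0 ∈ A
    · rw [bernoulliExpect_comp_centeredSum_of_zero_mem (· ^ 4) h, card_eq_card_succ_add_one h]
      set B : Finset (Fin n) := {i | i.succ ∈ A}
      simp only [bernoulliExpect_const_add_pow_four, bernoulliExpect_centeredSum,
        bernoulliExpect_centeredSum_sq, Fintype.sum_bool, bernoulliWeight]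
      push_cast
      have hp : ρ * (1 - ρ) ≤ 1 / 4 := by nlinarith [sq_nonneg (2 * ρ - 1)]
      have hp0 : 0 ≤ ρ * (1 - ρ) := mul_nonneg h0 (by linarith)
      nlinarith [ih B, mul_nonneg hp0 hp0, mul_nonneg hp0 (Nat.cast_nonneg (α := ℝ) #B)]
    · rw [bernoulliExpect_comp_centeredSum_of_zero_notMem (· ^ 4) h, card_eq_card_succ h]
      exact ih _

lemma bernoulliExpect_empiricalDensity_sub_pow_four_le (h0 : 0 ≤ ρ) (h1 : ρ ≤ 1)
    {A : Finset (Fin n)} (hA : A.Nonempty) :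
    bernoulliExpect ρ (fun η => (empiricalDensity A η - ρ) ^ 4) ≤ 1 / (#A : ℝ) ^ 2 := by
  have hA' : (0 : ℝ) < #A := by exact_mod_cast hA.card_pos
  simp only [empiricalDensity_sub hA, div_pow, div_eq_inv_mul (centeredSum ρ A _ ^ 4),
    bernoulliExpect_const_mul]
  calc ((#A : ℝ) ^ 4)⁻¹ * bernoulliExpect ρ (fun η => centeredSum ρ A η ^ 4)
      ≤ ((#A : ℝ) ^ 4)⁻¹ * (#A : ℝ) ^ 2 := by
        gcongr
        exact bernoulliExpect_centeredSum_pow_four_le h0 h1 A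
    _ = 1 / (#A : ℝ) ^ 2 := by field_simp

end

lemma mul_one_sub_div_mem_Icc {a L M : ℝ} (ha : a ∈ Set.Icc 0 1) (hL : 0 < L)
    (hM : L ≤ 2 * M) : a * (1 - a) / M ∈ Set.Icc 0 (1 / (2 * L)) := by
  have hM0 : 0 < M := by linarith
  refine ⟨div_nonneg (mul_nonneg ha.1 (by linarith [ha.2])) hM0.le, ?_⟩
  rw [div_le_div_iff₀ hM0 (by positivity)]
  nlinarith [sq_nonneg (2 * a - 1)]

lemma sq_sub_sub_add_le {P Q d₁ d₂ δ : ℝ} (hP : 0 ≤ P) (hQ : 0 ≤ Q) (h₁ : d₁ ∈ Set.Icc 0 δ)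
    (h₂ : d₂ ∈ Set.Icc 0 δ) : (P - d₁ - Q + d₂) ^ 2 ≤ 2 * P ^ 2 + 2 * Q ^ 2 + 2 * δ ^ 2 := by
  obtain ⟨h₁0, h₁δ⟩ := h₁
  obtain ⟨h₂0, h₂δ⟩ := h₂
  nlinarith [sq_nonneg (P - Q + d₁ - d₂), mul_nonneg hP hQ, mul_nonneg (sub_nonneg.2 h₁δ) h₂0,
    mul_nonneg (sub_nonneg.2 h₂δ) h₁0]

lemma sq_sub_chi_correction_le {ρ L a c : ℝ} (hL : 2 ≤ L) (ha : a ∈ Set.Icc 0 1)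
    (hc : c ∈ Set.Icc 0 1) :
    ((a - ρ) ^ 2 - a * (1 - a) / (L - 1) - (c - ρ) ^ 2 + c * (1 - c) / (2 * L - 1)) ^ 2
      ≤ 2 * (a - ρ) ^ 4 + 2 * (c - ρ) ^ 4 + 1 / (2 * L ^ 2) := by
  have hL0 : 0 < L := by linarith
  calc _ ≤ 2 * ((a - ρ) ^ 2) ^ 2 + 2 * ((c - ρ) ^ 2) ^ 2 + 2 * (1 / (2 * L)) ^ 2 :=
        sq_sub_sub_add_le (sq_nonneg _) (sq_nonneg _)
          (mul_one_sub_div_mem_Icc ha hL0 (by linarith))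
          (mul_one_sub_div_mem_Icc hc hL0 (by linarith))
    _ = _ := by ring

end

/-- Renormalization-step variance bound: with `η^ℓ`, `η^{2ℓ}` the empirical densities in
boxes of sizes `ℓ` and `2ℓ` of i.i.d. Bernoulli(ρ) variables and
`Ṽ = (η^ℓ-ρ)² - χ(η^ℓ)/(ℓ-1) - (η^{2ℓ}-ρ)² + χ(η^{2ℓ})/(2ℓ-1)`, there is a constant
`C = C(ρ)` with `Var_ρ[Ṽ] ≤ C/ℓ²` for all `ℓ ≥ 2`. -/
theorem stmt15 (ρ : ℝ) (h0 : 0 < ρ) (h1 : ρ < 1) :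
    ∃ C : ℝ, 0 < C ∧ ∀ ℓ : ℕ, 2 ≤ ℓ →
      let ind : Bool → ℝ := fun b => if b then 1 else 0
      let w : (Fin (2 * ℓ) → Bool) → ℝ := fun η => ∏ y, (if η y then ρ else 1 - ρ)
      let avg1 : (Fin (2 * ℓ) → Bool) → ℝ := fun η =>
        (∑ y ∈ Finset.univ.filter (fun y : Fin (2 * ℓ) => (y : ℕ) < ℓ), ind (η y)) / ℓ
      let avg2 : (Fin (2 * ℓ) → Bool) → ℝ := fun η => (∑ y, ind (η y)) / (2 * ℓ)
      let V : (Fin (2 * ℓ) → Bool) → ℝ := fun η =>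
        (avg1 η - ρ) ^ 2 - (avg1 η * (1 - avg1 η)) / ((ℓ : ℝ) - 1)
          - (avg2 η - ρ) ^ 2 + (avg2 η * (1 - avg2 η)) / (2 * (ℓ : ℝ) - 1)
      let E : ((Fin (2 * ℓ) → Bool) → ℝ) → ℝ := fun f => ∑ η, w η * f η
      E (fun η => (V η) ^ 2) - (E V) ^ 2 ≤ C / (ℓ : ℝ) ^ 2 := by
  refine ⟨3, by norm_num, fun ℓ hℓ => ?_⟩
  intro ind w avg1 avg2 V E
  have hℓR : (2 : ℝ) ≤ ℓ := by exact_mod_cast hℓ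
  set A : Finset (Fin (2 * ℓ)) := {y | (y : ℕ) < ℓ}
  have hA : #A = ℓ := by rw [Fin.card_filter_val_lt]; omega
  have hA' : A.Nonempty := Finset.card_pos.1 (by omega)
  have hU : (#(univ : Finset (Fin (2 * ℓ))) : ℝ) = 2 * ℓ := by simp
  have h_avg1 : ∀ η, avg1 η = empiricalDensity A η := fun η => by rw [empiricalDensity, hA]
  have h_avg2 : ∀ η, avg2 η = empiricalDensity univ η := fun η => by rw [empiricalDensity, hU]
  have hV : ∀ η, V η ^ 2 ≤ 2 * (avg1 η - ρ) ^ 4 + 2 * (avg2 η - ρ) ^ 4 + 1 / (2 * (ℓ : ℝ) ^ 2) :=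
    fun η => sq_sub_chi_correction_le hℓR (h_avg1 η ▸ empiricalDensity_mem_Icc A η)
      (h_avg2 η ▸ empiricalDensity_mem_Icc univ η)
  have hE1 : bernoulliExpect ρ (fun η => (avg1 η - ρ) ^ 4) ≤ 1 / (ℓ : ℝ) ^ 2 := by
    simpa only [h_avg1, hA] using bernoulliExpect_empiricalDensity_sub_pow_four_le h0.le h1.le hA'
  have hE2 : bernoulliExpect ρ (fun η => (avg2 η - ρ) ^ 4) ≤ 1 / (2 * (ℓ : ℝ)) ^ 2 := by
    simpa only [h_avg2, hU] using
      bernoulliExpect_empiricalDensity_sub_pow_four_le h0.le h1.le (hA'.mono (subset_univ A))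
  calc E (fun η => V η ^ 2) - E V ^ 2 ≤ bernoulliExpect ρ (fun η => V η ^ 2) :=
        sub_le_self _ (sq_nonneg _)
    _ ≤ bernoulliExpect ρ
          (fun η => 2 * (avg1 η - ρ) ^ 4 + 2 * (avg2 η - ρ) ^ 4 + 1 / (2 * (ℓ : ℝ) ^ 2)) :=
        bernoulliExpect_mono h0.le h1.le hV
    _ = 2 * bernoulliExpect ρ (fun η => (avg1 η - ρ) ^ 4)
          + 2 * bernoulliExpect ρ (fun η => (avg2 η - ρ) ^ 4) + 1 / (2 * (ℓ : ℝ) ^ 2) := by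
        simp only [bernoulliExpect_add, bernoulliExpect_const_mul, bernoulliExpect_const]
    _ ≤ 2 * (1 / (ℓ : ℝ) ^ 2) + 2 * (1 / (2 * (ℓ : ℝ)) ^ 2) + 1 / (2 * (ℓ : ℝ) ^ 2) := by
        gcongr
    _ = 3 / (ℓ : ℝ) ^ 2 := by field_simp; ring
end
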